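/- If xx is a 7/3-power-free binary square and xx = μ(y) for some binary word y, where μ is the Thue–Morse morphism, then |y| is even, and consequently y is itself a square. -/

import Mathlib

def mu (w : List Bool) : List Bool := w.flatMap (fun b => if b then [true, false] else [false, true])

def isPow (beta : ℚ) (w : List Bool) : Prop :=
  ∃ (n : ℕ) (x x' : List Bool), x ≠ [] ∧ x' <+: x ∧
    w = (List.replicate n x).flatten ++ x' ∧ beta = n + (x'.length : ℚ) / (x.length : ℚ)

def PowFree (a : ℚ) (w : List Bool) : Prop :=
  ∀ v, v <:+: w → ∀ beta : ℚ, a ≤ beta → ¬ isPow beta v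

def OverlapFree (w : List Bool) : Prop :=
  ∀ u v : List Bool, u ≠ [] → ¬ (u ++ v ++ u ++ v ++ u) <:+: w

/-! If `|y|` were odd, the second copy of `x` would start in the middle of a block `μ(c) = c c̄`,
so `x = μ(u) c = c̄ μ(v)`. Comparing the two factorisations block by block forces `x` to
alternate, and since `|x|` is odd its last letter equals its first, i.e. `c = c̄`. Once `|y| = 2k`,
both halves of `x x` are images of halves of `y`, and injectivity of `μ` makes them equal. -/

@[simp]
lemma mu_nil : mu [] = [] := rfl

@[simp]
lemma mu_cons (b : Bool) (y : List Bool) : mu (b :: y) = b :: (!b) :: mu y := by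
  cases b <;> simp [mu]

@[simp]
lemma mu_append (u v : List Bool) : mu (u ++ v) = mu u ++ mu v := by
  simp [mu]

@[simp]
lemma length_mu (y : List Bool) : (mu y).length = 2 * y.length := by
  induction y with
  | nil => rfl
  | cons b y ih => simp only [mu_cons, List.length_cons, ih]; omega

lemma mu_injective : Function.Injective mu := by
  intro u
  induction u with
  | nil => rintro (_ | ⟨b, v⟩) h <;> simp_all
  | cons a u ih =>
    rintro (_ | ⟨b, v⟩) h
    · simp at h
    · obtain ⟨rfl, hmu⟩ := by simpa using h
      rw [ih hmu]

lemma eq_of_mu_append_singleton_eq_cons_mu {u v : List Bool} {c d : Bool}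
    (h : mu u ++ [c] = d :: mu v) : c = d := by
  induction u generalizing v d with
  | nil => exact (List.cons.inj h).1
  | cons a u ih =>
    obtain _ | ⟨e, v⟩ := v
    · simp at h
    · obtain ⟨rfl, hea, h⟩ := by simpa using h
      subst hea
      exact ih (by simpa using h)

lemma length_eq_of_append_self_eq_mu {x y : List Bool} (he : x ++ x = mu y) :
    x.length = y.length := by
  have := congrArg List.length he
  simp only [List.length_append, length_mu] at this
  omega

lemma even_length_of_append_self_eq_mu {x y : List Bool} (he : x ++ x = mu y) :
    Even y.length := by
  have hlen := length_eq_of_append_self_eq_mu he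
  by_contra hodd
  obtain ⟨k, hk⟩ := Nat.not_even_iff_odd.mp hodd
  obtain ⟨c, v, hv⟩ : ∃ c v, y.drop k = c :: v :=
    List.exists_cons_of_ne_nil (by simp only [ne_eq, List.drop_eq_nil_iff, not_le]; omega)
  have hy : y = y.take k ++ c :: v := hv ▸ (List.take_append_drop k y).symm
  have hsplit : (mu (y.take k) ++ [c]) ++ ((!c) :: mu v) = x ++ x := by
    rw [he]; conv_rhs => rw [hy]
    simp
  have hx := List.append_inj hsplit (by simp only [List.length_append, length_mu, List.length_take,
    List.length_cons, List.length_nil, zero_add]; omega)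
  have hc := eq_of_mu_append_singleton_eq_cons_mu (hx.1.trans hx.2.symm)
  simp at hc

theorem stmt3_general (x y : List Bool) (he : x ++ x = mu y) :
    Even y.length ∧ ∃ z, y = z ++ z := by
  have heven := even_length_of_append_self_eq_mu he
  refine ⟨heven, ?_⟩
  obtain ⟨k, hk⟩ := heven
  have hlen := length_eq_of_append_self_eq_mu he
  have hsplit : mu (y.take k) ++ mu (y.drop k) = x ++ x := by
    rw [← mu_append, List.take_append_drop, he]
  have hx := List.append_inj hsplit (by simp only [length_mu, List.length_take]; omega)
  have hhalves : y.take k = y.drop k := mu_injective (hx.1.trans hx.2.symm)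
  exact ⟨y.take k, by simpa [hhalves] using (List.take_append_drop k y).symm⟩

theorem stmt3 (x y : List Bool) (h : PowFree (7/3) (x ++ x)) (he : x ++ x = mu y) :
    Even y.length ∧ ∃ z, y = z ++ z :=
  stmt3_general x y he
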